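/- arXiv:1412.1725 — 6 statements merged into one kernel-verified Lean document; each statement's English description precedes it below -/
import Mathlib

section
/- Let ω, N, R : ℝ → ℝ be differentiable at r₀, with N(r₀) > 0, R(r₀) > 0, N'(r₀) ≥ 0, ω'(r₀) < 0, and let L < 0, m ∈ ℝ, E ∈ ℝ satisfy the circular-orbit relation E − ω(r₀)L = N(r₀)·√(m² + L²/R(r₀)²). Define Z²(r) = (E − ω(r)L)² − N(r)²·(m² + L²/R(r)²) and χ(r) = ω(r) − N(r)/R(r). Then (1/2)·(Z²)'(r₀) ≤ L²·(N(r₀)/R(r₀))·χ'(r₀). -/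
/-!
Write `s = √(m² + L²/R²)`, so that the circular-orbit relation reads `X = N s`. Computing both
derivatives and eliminating `m² = s² - L²/R²`, the difference of the two sides at `r₀` is
`N ω' L (s + L/R) + N N' m²`. Both terms are nonnegative: `ω' L > 0`, and `s ≥ |L/R|`.
-/

open Real

section Derivatives

variable {ω N R : ℝ → ℝ} {ω' N' R' r : ℝ}

theorem hasDerivAt_Zsq (E L m : ℝ) (hω : HasDerivAt ω ω' r) (hN : HasDerivAt N N' r)
    (hR : HasDerivAt R R' r) (hR0 : R r ≠ 0) :
    HasDerivAt (fun r => (E - ω r * L) ^ 2 - N r ^ 2 * (m ^ 2 + L ^ 2 / R r ^ 2))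
      (-2 * (E - ω r * L) * ω' * L - 2 * N r * N' * (m ^ 2 + L ^ 2 / R r ^ 2)
        + 2 * N r ^ 2 * L ^ 2 * R' / R r ^ 3) r := by
  have hX : HasDerivAt (fun r => E - ω r * L) (-(ω' * L)) r := (hω.mul_const L).const_sub E
  have hV : HasDerivAt (fun r => m ^ 2 + L ^ 2 / R r ^ 2)
      (-(L ^ 2 * (2 * R r * R')) / (R r ^ 2) ^ 2) r := by
    simpa using
      ((hasDerivAt_const r (L ^ 2)).div (hR.fun_pow 2) (pow_ne_zero 2 hR0)).const_add (m ^ 2)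
  refine ((hX.fun_pow 2).sub ((hN.fun_pow 2).mul hV)).congr_deriv ?_
  field_simp
  ring

theorem hasDerivAt_chi (hω : HasDerivAt ω ω' r) (hN : HasDerivAt N N' r)
    (hR : HasDerivAt R R' r) (hR0 : R r ≠ 0) :
    HasDerivAt (fun r => ω r - N r / R r) (ω' - (N' * R r - N r * R') / R r ^ 2) r :=
  hω.sub (hN.div hR hR0)

end Derivatives

theorem neg_div_le_sqrt_sq_add_sq_div (L ρ m : ℝ) :
    -(L / ρ) ≤ √(m ^ 2 + L ^ 2 / ρ ^ 2) :=
  (neg_le_abs _).trans <| abs_le_sqrt (by rw [div_pow]; nlinarith [sq_nonneg m])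

theorem half_Zsq_deriv_circular_eq {n n' ω' ρ ρ' L m s : ℝ} (hρ : ρ ≠ 0)
    (hs : s ^ 2 = m ^ 2 + L ^ 2 / ρ ^ 2) :
    (1 / 2) * (-2 * (n * s) * ω' * L - 2 * n * n' * (m ^ 2 + L ^ 2 / ρ ^ 2)
        + 2 * n ^ 2 * L ^ 2 * ρ' / ρ ^ 3)
      = L ^ 2 * (n / ρ) * (ω' - (n' * ρ - n * ρ') / ρ ^ 2)
        - n * (ω' * L) * (s + L / ρ) - n * n' * m ^ 2 := by
  rw [show m ^ 2 = s ^ 2 - L ^ 2 / ρ ^ 2 by linarith]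
  field_simp
  ring

/-- On a circular orbit with L < 0, ω' < 0, N' ≥ 0:
(1/2)(Z²)' ≤ L² (N/R) χ', where χ = ω - N/R. -/
theorem deriv_Zsq_le_chi
    (ω N R : ℝ → ℝ) (r₀ E L m : ℝ)
    (hω : DifferentiableAt ℝ ω r₀) (hN : DifferentiableAt ℝ N r₀)
    (hR : DifferentiableAt ℝ R r₀)
    (hN0 : 0 < N r₀) (hR0 : 0 < R r₀)
    (hN' : 0 ≤ deriv N r₀) (hω' : deriv ω r₀ < 0) (hL : L < 0)
    (hcirc : E - ω r₀ * L = N r₀ * Real.sqrt (m^2 + L^2 / (R r₀)^2)) :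
    (1/2) * deriv (fun r => (E - ω r * L)^2 - (N r)^2 * (m^2 + L^2 / (R r)^2)) r₀
      ≤ L^2 * (N r₀ / R r₀) * deriv (fun r => ω r - N r / R r) r₀ := by
  have hR0' : R r₀ ≠ 0 := hR0.ne'
  rw [(hasDerivAt_Zsq E L m hω.hasDerivAt hN.hasDerivAt hR.hasDerivAt hR0').deriv,
    (hasDerivAt_chi hω.hasDerivAt hN.hasDerivAt hR.hasDerivAt hR0').deriv, hcirc,
    half_Zsq_deriv_circular_eq hR0' (sq_sqrt (by positivity))]
  have hωL : 0 ≤ N r₀ * (deriv ω r₀ * L) * (√(m ^ 2 + L ^ 2 / R r₀ ^ 2) + L / R r₀) :=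
    mul_nonneg (mul_nonneg hN0.le (mul_nonneg_of_nonpos_of_nonpos hω'.le hL.le))
      (by linarith [neg_div_le_sqrt_sq_add_sq_div L (R r₀) m])
  have hNm : 0 ≤ N r₀ * deriv N r₀ * m ^ 2 := by positivity
  linarith
end

section
/- (Main Theorem) Let ω, N, R : ℝ → ℝ be differentiable at r₀ and satisfy: N(r₀) > 0, R(r₀) > 0, ω(r₀) > 0, ω'(r₀) < 0, N'(r₀) ≥ 0, R'(r₀) ≥ 0, (d/dr)[ω(r)·R(r)](r₀) < 0, and the ergoregion condition N(r₀) < ω(r₀)·R(r₀). Let m > 0, E < 0, and L ∈ ℝ satisfy the forward-in-time condition E − ω(r₀)L ≥ 0. Define Z²(r) = (E − ω(r)L)² − N(r)²·(m² + L²/R(r)²). Then there is no circular orbit at r₀, i.e. it is not the case that both Z²(r₀) = 0 and (Z²)'(r₀) = 0. -/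
/-!
Since `E < 0 ≤ E - ωL` and `ω > 0`, the angular momentum is negative. At a zero of `Z²`,
`(XR)² = N²(m²R² + L²) > (NL)²`, so `XR > -NL > 0`. The derivative of `Z²` is
`-2ω'LX - 2NN'(m² + L²/R²) + 2N²L²R'/R³`; the middle term is `≤ 0`, and multiplying the rest
by `R³ > 0` and using `XR > -NL`, `ω'L > 0` bounds it strictly by `2NL²(ω'R² + NR') ≤ 0`. Finally
`ω'R² + NR' ≤ ω'R² + ωRR' = R(ωR)' < 0` because `N < ωR` and `R' ≥ 0`. Hence `(Z²)' < 0`.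
-/

/-- `Z²`, the right-hand side of the radial equation `m²ṙ² = Z²`. -/
noncomputable def radialPotential (ω N R : ℝ → ℝ) (E L m r : ℝ) : ℝ :=
  (E - ω r * L) ^ 2 - N r ^ 2 * (m ^ 2 + L ^ 2 / R r ^ 2)

theorem hasDerivAt_radialPotential {ω N R : ℝ → ℝ} {r : ℝ} (E L m : ℝ)
    (hω : DifferentiableAt ℝ ω r) (hN : DifferentiableAt ℝ N r) (hR : DifferentiableAt ℝ R r)
    (hR0 : R r ≠ 0) :
    HasDerivAt (radialPotential ω N R E L m)
      (-2 * (E - ω r * L) * deriv ω r * L - 2 * N r * deriv N r * (m ^ 2 + L ^ 2 / R r ^ 2)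
        + 2 * N r ^ 2 * L ^ 2 * deriv R r / R r ^ 3) r := by
  have hX := ((hasDerivAt_const r E).fun_sub (hω.hasDerivAt.mul_const L)).fun_pow 2
  have hRsq := hR.hasDerivAt.fun_pow 2
  have hquot := (hasDerivAt_const r (L ^ 2)).fun_div hRsq (pow_ne_zero 2 hR0)
  have hprod := (hN.hasDerivAt.fun_pow 2).fun_mul ((hasDerivAt_const r (m ^ 2)).fun_add hquot)
  refine (hX.sub hprod).congr_deriv ?_
  field_simp
  ring

theorem deriv_mul_sq_add_mul_deriv_neg_of_ergoregion {ω N R : ℝ → ℝ} {r : ℝ}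
    (hω : DifferentiableAt ℝ ω r) (hR : DifferentiableAt ℝ R r) (hR0 : 0 < R r)
    (hR' : 0 ≤ deriv R r) (hergo : N r < ω r * R r)
    (hωR' : deriv (fun r => ω r * R r) r < 0) :
    deriv ω r * R r ^ 2 + N r * deriv R r < 0 := by
  rw [deriv_fun_mul hω hR] at hωR'
  nlinarith [mul_le_mul_of_nonneg_right hergo.le hR', mul_neg_of_neg_of_pos hωR' hR0]

theorem abs_mul_lt_of_sq_eq {X n ρ L m : ℝ} (hX : 0 ≤ X) (hρ : 0 < ρ) (hn : n ≠ 0) (hm : m ≠ 0)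
    (h : X ^ 2 = n ^ 2 * (m ^ 2 + L ^ 2 / ρ ^ 2)) :
    |n * L| < X * ρ := by
  refine abs_lt_of_sq_lt_sq ?_ (mul_nonneg hX hρ.le)
  have hnmρ : 0 < (n * m * ρ) ^ 2 := by positivity
  calc (n * L) ^ 2 < (n * L) ^ 2 + (n * m * ρ) ^ 2 := lt_add_of_pos_right _ hnmρ
    _ = (X * ρ) ^ 2 := by rw [mul_pow X, h]; field_simp; ring

theorem radialPotential_deriv_expr_neg {X ω' L n n' ρ ρ' m : ℝ} (hρ : 0 < ρ) (hn : 0 ≤ n)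
    (hn' : 0 ≤ n') (hωL : 0 < ω' * L) (hXρ : -(n * L) < X * ρ) (hkey : ω' * ρ ^ 2 + n * ρ' < 0) :
    -2 * X * ω' * L - 2 * n * n' * (m ^ 2 + L ^ 2 / ρ ^ 2) + 2 * n ^ 2 * L ^ 2 * ρ' / ρ ^ 3 < 0 := by
  have hmiddle : 0 ≤ 2 * n * n' * (m ^ 2 + L ^ 2 / ρ ^ 2) := by positivity
  have hcleared : n ^ 2 * L ^ 2 * ρ' < X * ω' * L * ρ ^ 3 :=
    calc n ^ 2 * L ^ 2 * ρ' = n * L ^ 2 * (ω' * ρ ^ 2 + n * ρ') + ω' * L * ρ ^ 2 * -(n * L) := by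
          ring
      _ ≤ ω' * L * ρ ^ 2 * -(n * L) :=
          add_le_of_nonpos_left (mul_nonpos_of_nonneg_of_nonpos (by positivity) hkey.le)
      _ < ω' * L * ρ ^ 2 * (X * ρ) := mul_lt_mul_of_pos_left hXρ (by positivity)
      _ = X * ω' * L * ρ ^ 3 := by ring
  have hquot : 2 * n ^ 2 * L ^ 2 * ρ' / ρ ^ 3 < 2 * X * ω' * L := by
    rw [div_lt_iff₀ (pow_pos hρ 3)]
    linarith
  linarith

/-- Main theorem: under the monotonicity conditions and (ωR)' < 0, in the ergoregion
there is no circular orbit with negative energy at r₀. -/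
theorem no_circular_negative_energy_orbit
    (ω N R : ℝ → ℝ) (r₀ E L m : ℝ)
    (hω : DifferentiableAt ℝ ω r₀) (hN : DifferentiableAt ℝ N r₀)
    (hR : DifferentiableAt ℝ R r₀)
    (hN0 : 0 < N r₀) (hR0 : 0 < R r₀) (hω0 : 0 < ω r₀)
    (hω' : deriv ω r₀ < 0) (hN' : 0 ≤ deriv N r₀) (hR' : 0 ≤ deriv R r₀)
    (hωR' : deriv (fun r => ω r * R r) r₀ < 0)
    (hergo : N r₀ < ω r₀ * R r₀)
    (hm : 0 < m) (hE : E < 0) (hX : 0 ≤ E - ω r₀ * L) :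
    ¬ ((E - ω r₀ * L)^2 - (N r₀)^2 * (m^2 + L^2 / (R r₀)^2) = 0 ∧
       deriv (fun r => (E - ω r * L)^2 - (N r)^2 * (m^2 + L^2 / (R r)^2)) r₀ = 0) := by
  rintro ⟨hZ, hZ'⟩
  have hL : L < 0 := neg_of_mul_neg_right (by linarith) hω0.le
  have hXR : -(N r₀ * L) < (E - ω r₀ * L) * R r₀ :=
    (neg_le_abs _).trans_lt (abs_mul_lt_of_sq_eq hX hR0 hN0.ne' hm.ne' (sub_eq_zero.1 hZ))
  have hkey := deriv_mul_sq_add_mul_deriv_neg_of_ergoregion hω hR hR0 hR' hergo hωR'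
  have hderiv := (hasDerivAt_radialPotential E L m hω hN hR hR0.ne').deriv
  have hωL : 0 < deriv ω r₀ * L := mul_pos_of_neg_of_neg hω' hL
  exact (radialPotential_deriv_expr_neg (m := m) hR0 hN0.le hN' hωL hXR hkey).ne
    (hderiv.symm.trans hZ')
end

section
/- (Modified Theorem) Let ω, N, R : ℝ → ℝ be differentiable at r₀ with N(r₀) > 0, R(r₀) > 0, ω(r₀) > 0, ω'(r₀) < 0, N'(r₀) ≥ 0, and suppose the function χ(r) = ω(r) − N(r)/R(r) satisfies χ'(r₀) < 0. Let m > 0, E < 0, and L ∈ ℝ satisfy E − ω(r₀)L ≥ 0. Define Z²(r) = (E − ω(r)L)² − N(r)²·(m² + L²/R(r)²). Then it is not the case that both Z²(r₀) = 0 and (Z²)'(r₀) = 0. -/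
/-!
With `X = E - ω L`, the condition `Z² = 0` reads `(X R)² = (N L)² + (N m R)²`, so `X R > |N L|`.
Substituting it into `(Z²)' = 0` eliminates `m` and leaves
`N X ω' L R³ + N' X² R³ = N³ L² R'`. Since `E < 0 < ω` forces `L < 0`, the left side is positive
when `ω' < 0`, so `R' > 0`; the identity
`N X (-L) R · (ω' R² - N' R + N R') = (X R + N L) (N' X R² - N² L R')`
then makes `R² χ' = ω' R² - N' R + N R'` positive.
-/

namespace CircularOrbit

lemma abs_lt_of_sq_eq_sq_add_sq {a b c : ℝ} (hb : 0 ≤ b) (hc : c ≠ 0)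
    (h : b ^ 2 = a ^ 2 + c ^ 2) : |a| < b :=
  abs_lt_of_sq_lt_sq (by nlinarith [pow_pos (abs_pos.mpr hc) 2, sq_abs c]) hb

variable {ω N R : ℝ → ℝ} {r₀ ω' N' R' : ℝ}

theorem hasDerivAt_radialPotential (E L m : ℝ) (hω : HasDerivAt ω ω' r₀)
    (hN : HasDerivAt N N' r₀) (hR : HasDerivAt R R' r₀) (hR0 : R r₀ ≠ 0) :
    HasDerivAt (fun r => (E - ω r * L)^2 - (N r)^2 * (m^2 + L^2 / (R r)^2))
      (-2 * (E - ω r₀ * L) * ω' * L - 2 * N r₀ * N' * (m^2 + L^2 / (R r₀)^2)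
        + 2 * (N r₀)^2 * L^2 * R' / (R r₀)^3) r₀ := by
  refine (((hω.mul_const L).const_sub E).fun_pow 2 |>.fun_sub
    ((hN.fun_pow 2).fun_mul (((hasDerivAt_const r₀ (L^2)).fun_div (hR.fun_pow 2)
      (pow_ne_zero 2 hR0)).const_add (m^2)))).congr_deriv ?_
  field_simp
  ring

theorem circularOrbit_derivative_relation {X N R L m ω' N' R' : ℝ} (hR : R ≠ 0)
    (hZ : X^2 - N^2 * (m^2 + L^2 / R^2) = 0)
    (hZ' : -2 * X * ω' * L - 2 * N * N' * (m^2 + L^2 / R^2) + 2 * N^2 * L^2 * R' / R^3 = 0) :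
    N * X * ω' * L * R^3 + N' * X^2 * R^3 = N^3 * L^2 * R' := by
  field_simp at hZ hZ'
  linear_combination (-N / 2) * hZ' + (N' * R) * hZ

theorem chi_deriv_pos_of_circularOrbit {X N R L ω' N' R' : ℝ} (hX : 0 < X) (hN : 0 < N)
    (hR : 0 < R) (hL : L < 0) (hω' : ω' < 0) (hN' : 0 ≤ N') (hXN : 0 < X * R + N * L)
    (hrel : N * X * ω' * L * R^3 + N' * X^2 * R^3 = N^3 * L^2 * R') :
    0 < ω' - (N' * R - N * R') / R^2 := by
  have hR' : 0 < R' := by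
    have hlhs : 0 < N * X * ω' * L * R^3 + N' * X^2 * R^3 := by
      have hωL : 0 < ω' * L := mul_pos_of_neg_of_neg hω' hL
      have : 0 ≤ N' * X^2 * R^3 := by positivity
      nlinarith [mul_pos (mul_pos (mul_pos hN hX) hωL) (pow_pos hR 3)]
    rw [hrel] at hlhs
    exact pos_of_mul_pos_right hlhs (by positivity)
  have key : N * X * (-L) * R * (ω' * R^2 - N' * R + N * R') =
      (X * R + N * L) * (N' * X * R^2 + N^2 * (-L) * R') := by
    linear_combination -hrel
  have hnum : 0 < ω' * R^2 - N' * R + N * R' := by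
    have hNL : 0 < -L := neg_pos.mpr hL
    refine pos_of_mul_pos_right (key ▸ mul_pos hXN ?_) (by positivity)
    positivity
  calc 0 < (ω' * R^2 - N' * R + N * R') / R^2 := by positivity
    _ = ω' - (N' * R - N * R') / R^2 := by field_simp; ring

end CircularOrbit

open CircularOrbit in
/-- Modified theorem: if χ' < 0 where χ = ω - N/R, there is no circular orbit with
negative energy at r₀. -/
theorem no_circular_orbit_of_chi_decreasing
    (ω N R : ℝ → ℝ) (r₀ E L m : ℝ)
    (hω : DifferentiableAt ℝ ω r₀) (hN : DifferentiableAt ℝ N r₀)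
    (hR : DifferentiableAt ℝ R r₀)
    (hN0 : 0 < N r₀) (hR0 : 0 < R r₀) (hω0 : 0 < ω r₀)
    (hω' : deriv ω r₀ < 0) (hN' : 0 ≤ deriv N r₀)
    (hχ' : deriv (fun r => ω r - N r / R r) r₀ < 0)
    (hm : 0 < m) (hE : E < 0) (hX : 0 ≤ E - ω r₀ * L) :
    ¬ ((E - ω r₀ * L)^2 - (N r₀)^2 * (m^2 + L^2 / (R r₀)^2) = 0 ∧
       deriv (fun r => (E - ω r * L)^2 - (N r)^2 * (m^2 + L^2 / (R r)^2)) r₀ = 0) := by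
  rintro ⟨hZ, hZ'⟩
  rw [(hasDerivAt_radialPotential E L m hω.hasDerivAt hN.hasDerivAt hR.hasDerivAt
    hR0.ne').deriv] at hZ'
  rw [(hω.hasDerivAt.fun_sub (hN.hasDerivAt.fun_div hR.hasDerivAt hR0.ne')).deriv] at hχ'
  have hL : L < 0 := by
    by_contra! hL
    nlinarith [mul_nonneg hω0.le hL]
  have hXR : |N r₀ * L| < (E - ω r₀ * L) * R r₀ := by
    refine abs_lt_of_sq_eq_sq_add_sq (by positivity) (by positivity : N r₀ * m * R r₀ ≠ 0) ?_
    field_simp at hZ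
    linear_combination hZ
  have hXpos : 0 < E - ω r₀ * L := pos_of_mul_pos_left ((abs_nonneg _).trans_lt hXR) hR0.le
  have hrel := circularOrbit_derivative_relation hR0.ne' hZ hZ'
  exact hχ'.not_gt <| chi_deriv_pos_of_circularOrbit hXpos hN0 hR0 hL hω' hN'
    (by linarith [neg_abs_le (N r₀ * L)]) hrel
end

section
/- Let M > 0, a, Q be real numbers with a² + Q² ≤ M², and let r₊ = M + √(M² − Q² − a²). For every r > r₊, the function N²(r) = (r² − 2Mr + Q² + a²)·r² / (r²·(r² + a²) + (2Mr − Q²)·a²) has positive derivative at r. -/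
/-!
Write N² = Δ r² / D with Δ = r² − 2Mr + Q² + a² and D = r²(r² + a²) + (2Mr − Q²)a². The numerator
of the derivative, (Δ r²)' D − Δ r² D', factors as 2r times

  (Mr − Q² − a²) r⁴ + a⁴ r (r − M) + a² r² (r² − Q² − a²) + a² (2Mr − Q²) Δ,

and outside the horizon every summand is nonnegative and the first one is positive, because there
Q² + a² ≤ M² < Mr.
-/

lemma deriv_div_pos {f g : ℝ → ℝ} {f' g' x : ℝ} (hf : HasDerivAt f f' x) (hg : HasDerivAt g g' x)
    (hgx : g x ≠ 0) (h : 0 < f' * g x - f x * g') : 0 < deriv (fun s => f s / g s) x := by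
  rw [(hf.fun_div hg hgx).deriv]
  exact div_pos h (pow_pos (abs_pos.mpr hgx) 2 |>.trans_eq (sq_abs _))

namespace KerrNewman

variable {M a Q r : ℝ}

lemma lt_and_delta_pos_of_horizon_lt (hr : M + √(M ^ 2 - Q ^ 2 - a ^ 2) < r) :
    M < r ∧ 0 < r ^ 2 - 2 * M * r + Q ^ 2 + a ^ 2 := by
  have hsqrt := Real.sqrt_nonneg (M ^ 2 - Q ^ 2 - a ^ 2)
  have hsq : M ^ 2 - Q ^ 2 - a ^ 2 < (r - M) ^ 2 := (Real.sqrt_lt' (by linarith)).mp (by linarith)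
  exact ⟨by linarith, by nlinarith⟩

lemma hasDerivAt_numerator (M a Q r : ℝ) :
    HasDerivAt (fun s : ℝ => (s ^ 2 - 2 * M * s + Q ^ 2 + a ^ 2) * s ^ 2)
      ((2 * r - 2 * M) * r ^ 2 + (r ^ 2 - 2 * M * r + Q ^ 2 + a ^ 2) * (2 * r)) r := by
  have hsq : HasDerivAt (fun s : ℝ => s ^ 2) (2 * r) r := by simpa using hasDerivAt_pow 2 r
  exact ((((hsq.fun_sub ((hasDerivAt_id' r).const_mul (2 * M))).add_const (Q ^ 2)).add_const
    (a ^ 2)).fun_mul hsq).congr_deriv (by ring)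

lemma hasDerivAt_denominator (M a Q r : ℝ) :
    HasDerivAt (fun s : ℝ => s ^ 2 * (s ^ 2 + a ^ 2) + (2 * M * s - Q ^ 2) * a ^ 2)
      (2 * r * (r ^ 2 + a ^ 2) + r ^ 2 * (2 * r) + 2 * M * a ^ 2) r := by
  have hsq : HasDerivAt (fun s : ℝ => s ^ 2) (2 * r) r := by simpa using hasDerivAt_pow 2 r
  exact ((hsq.fun_mul (hsq.add_const (a ^ 2))).fun_add
    ((((hasDerivAt_id' r).const_mul (2 * M)).sub_const (Q ^ 2)).mul_const (a ^ 2))).congr_deriv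
    (by ring)

lemma denominator_pos (hM : 0 < M) (h : a ^ 2 + Q ^ 2 ≤ M ^ 2) (hMr : M < r) :
    0 < r ^ 2 * (r ^ 2 + a ^ 2) + (2 * M * r - Q ^ 2) * a ^ 2 := by
  have hQ : Q ^ 2 < 2 * M * r := by nlinarith [sq_nonneg a]
  have hr : 0 < r := hM.trans hMr
  positivity

lemma numerator_deriv_mul_sub_pos (hM : 0 < M) (h : a ^ 2 + Q ^ 2 ≤ M ^ 2) (hMr : M < r)
    (hΔ : 0 ≤ r ^ 2 - 2 * M * r + Q ^ 2 + a ^ 2) :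
    0 < ((2 * r - 2 * M) * r ^ 2 + (r ^ 2 - 2 * M * r + Q ^ 2 + a ^ 2) * (2 * r)) *
          (r ^ 2 * (r ^ 2 + a ^ 2) + (2 * M * r - Q ^ 2) * a ^ 2) -
        (r ^ 2 - 2 * M * r + Q ^ 2 + a ^ 2) * r ^ 2 *
          (2 * r * (r ^ 2 + a ^ 2) + r ^ 2 * (2 * r) + 2 * M * a ^ 2) := by
  have hr : 0 < r := hM.trans hMr
  have hQa : Q ^ 2 + a ^ 2 < M * r := by nlinarith
  have hr2 : Q ^ 2 + a ^ 2 < r ^ 2 := by nlinarith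
  have hQ : 0 ≤ 2 * M * r - Q ^ 2 := by nlinarith [sq_nonneg a]
  have t₁ : 0 < (M * r - Q ^ 2 - a ^ 2) * r ^ 4 := mul_pos (by linarith) (by positivity)
  have t₂ : 0 ≤ a ^ 4 * r * (r - M) := mul_nonneg (by positivity) (by linarith)
  have t₃ : 0 ≤ a ^ 2 * r ^ 2 * (r ^ 2 - Q ^ 2 - a ^ 2) := mul_nonneg (by positivity) (by linarith)
  have t₄ : 0 ≤ a ^ 2 * (2 * M * r - Q ^ 2) * (r ^ 2 - 2 * M * r + Q ^ 2 + a ^ 2) := by positivity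
  calc 0 < 2 * r * ((M * r - Q ^ 2 - a ^ 2) * r ^ 4 + a ^ 4 * r * (r - M) +
          a ^ 2 * r ^ 2 * (r ^ 2 - Q ^ 2 - a ^ 2) +
          a ^ 2 * (2 * M * r - Q ^ 2) * (r ^ 2 - 2 * M * r + Q ^ 2 + a ^ 2)) := by positivity
    _ = _ := by ring

end KerrNewman

/-- The squared lapse N² of the Kerr–Newman metric has positive derivative
outside the horizon. -/
theorem KerrNewman_Nsq_deriv_pos
    (M a Q : ℝ) (hM : 0 < M) (h : a^2 + Q^2 ≤ M^2)
    (r : ℝ) (hr : M + Real.sqrt (M^2 - Q^2 - a^2) < r) :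
    0 < deriv (fun s => (s^2 - 2*M*s + Q^2 + a^2) * s^2 /
        (s^2 * (s^2 + a^2) + (2*M*s - Q^2) * a^2)) r := by
  obtain ⟨hMr, hΔ⟩ := KerrNewman.lt_and_delta_pos_of_horizon_lt hr
  exact deriv_div_pos (KerrNewman.hasDerivAt_numerator M a Q r)
    (KerrNewman.hasDerivAt_denominator M a Q r) (KerrNewman.denominator_pos hM h hMr).ne'
    (KerrNewman.numerator_deriv_mul_sub_pos hM h hMr hΔ.le)
end

section
/- Let M > 0, a > 0, Q be real numbers with a² + Q² ≤ M², and let r₊ = M + √(M² − Q² − a²). For every r > r₊, the frame-dragging function ω(r) = a·(2Mr − Q²) / (r²·(r² + a²) + (2Mr − Q²)·a²) has negative derivative at r. -/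
/-! The derivative of `ω = a P / D`, with `P = 2 M r - Q²` and `D = r² (r² + a²) + P a²`, is
`-2 a r (3 M r³ - 2 Q² r² + M a² r - Q² a²) / D²`. Outside the horizon `r > M ≥ |Q|`, so
`Q² < M r`, which makes each of `2 M r³ - 2 Q² r²` and `M a² r - Q² a²` positive; the cubic
factor exceeds their sum by `M r³ > 0`, and the derivative is negative. -/

noncomputable section

namespace KerrNewman

variable (M a Q : ℝ)

def frameDraggingDenom (s : ℝ) : ℝ := s^2 * (s^2 + a^2) + (2*M*s - Q^2) * a^2

def frameDragging (s : ℝ) : ℝ := a * (2*M*s - Q^2) / frameDraggingDenom M a Q s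

variable {M a Q}

theorem hasDerivAt_frameDraggingDenom (s : ℝ) :
    HasDerivAt (frameDraggingDenom M a Q) (4*s^3 + 2*a^2*s + 2*M*a^2) s := by
  have hP : HasDerivAt (fun s : ℝ => 2*M*s - Q^2) (2*M) s := by
    simpa using ((hasDerivAt_id s).const_mul (2*M)).sub_const (Q^2)
  have hsq : HasDerivAt (fun s : ℝ => s^2) (2*s) s := by simpa using hasDerivAt_pow 2 s
  exact ((hsq.mul (hsq.add_const (a^2))).add (hP.mul_const (a^2))).congr_deriv (by ring)

theorem hasDerivAt_frameDragging {s : ℝ} (hD : frameDraggingDenom M a Q s ≠ 0) :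
    HasDerivAt (frameDragging M a Q)
      (-(2*a*s * (3*M*s^3 - 2*Q^2*s^2 + M*a^2*s - Q^2*a^2)) / frameDraggingDenom M a Q s ^ 2)
      s := by
  have hP : HasDerivAt (fun s : ℝ => a * (2*M*s - Q^2)) (a * (2*M)) s := by
    simpa using (((hasDerivAt_id s).const_mul (2*M)).sub_const (Q^2)).const_mul a
  refine (hP.div (hasDerivAt_frameDraggingDenom s) hD).congr_deriv ?_
  unfold frameDraggingDenom
  ring

theorem sq_lt_mul_of_sq_le_sq_of_lt {s : ℝ} (hM : 0 < M) (hQ : Q^2 ≤ M^2) (hs : M < s) :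
    Q^2 < M * s :=
  calc Q^2 ≤ M * M := by rwa [← sq]
    _ < M * s := mul_lt_mul_of_pos_left hs hM

theorem frameDraggingDenom_pos {s : ℝ} (hM : 0 < M) (hQ : Q^2 < M * s) (hs : M < s) :
    0 < frameDraggingDenom M a Q s := by
  have hs0 : 0 < s := hM.trans hs
  have hP : 0 < 2*M*s - Q^2 := by nlinarith
  exact add_pos_of_pos_of_nonneg (mul_pos (pow_pos hs0 2) (by positivity))
    (mul_nonneg hP.le (sq_nonneg a))

theorem frameDragging_cubic_pos {s : ℝ} (hM : 0 < M) (ha : 0 < a) (hQ : Q^2 < M * s)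
    (hs : M < s) : 0 < 3*M*s^3 - 2*Q^2*s^2 + M*a^2*s - Q^2*a^2 := by
  have hs0 : 0 < s := hM.trans hs
  have h₁ : Q^2 * s^2 < M * s * s^2 := mul_lt_mul_of_pos_right hQ (by positivity)
  have h₂ : Q^2 * a^2 < M * s * a^2 := mul_lt_mul_of_pos_right hQ (by positivity)
  nlinarith [pow_pos hs0 3, mul_pos hM (pow_pos hs0 3)]

end KerrNewman

end

open KerrNewman in
/-- The frame-dragging function ω of the Kerr–Newman metric has negative derivative
outside the horizon. -/
theorem KerrNewman_omega_deriv_neg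
    (M a Q : ℝ) (hM : 0 < M) (ha : 0 < a) (h : a^2 + Q^2 ≤ M^2)
    (r : ℝ) (hr : M + Real.sqrt (M^2 - Q^2 - a^2) < r) :
    deriv (fun s => a * (2*M*s - Q^2) /
        (s^2 * (s^2 + a^2) + (2*M*s - Q^2) * a^2)) r < 0 := by
  have hMr : M < r := (le_add_of_nonneg_right (Real.sqrt_nonneg _)).trans_lt hr
  have hQr : Q^2 < M * r := sq_lt_mul_of_sq_le_sq_of_lt hM (by linarith [sq_nonneg a]) hMr
  have hD := frameDraggingDenom_pos (a := a) hM hQr hMr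
  change deriv (frameDragging M a Q) r < 0
  rw [(hasDerivAt_frameDragging hD.ne').deriv]
  have hnum : 0 < 2*a*r * (3*M*r^3 - 2*Q^2*r^2 + M*a^2*r - Q^2*a^2) :=
    mul_pos (mul_pos (mul_pos two_pos ha) (hM.trans hMr)) (frameDragging_cubic_pos hM ha hQr hMr)
  exact div_neg_of_neg_of_pos (neg_neg_of_pos hnum) (by positivity)
end

section
/- Let M > 0, a > 0, Q be real numbers with a² + Q² ≤ M², and let r₊ = M + √(M² − Q² − a²). For every r > r₊, the function ω(r)·R(r) = a·P(r)/R(r), where P(r) = 2M/r − Q²/r² and R(r) = √(r² + a² + (2Mr − Q²)·a²/r²), has negative derivative at r. -/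
/-!
With `P(s) = 2M/s - Q²/s²` one has `R² = s² + a² + a²·P`, so `R' = (2s + a²·P')/(2R)`.
The quotient rule gives `(ωR)' = a·(P'·R - P·R')/R²`, and each term has a definite sign as soon
as `r > M`: there `Q² ≤ M² - a² < M·r` makes `P > 0` and `P' = 2(Q² - M·r)/r³ < 0`, while
`a² < r²` gives `a²·M·r < r⁴`, hence `2r + a²·P' > 0` and `R' > 0`.
-/

theorem deriv_div_neg_of_hasDerivAt {u v : ℝ → ℝ} {u' v' x : ℝ}
    (hu : HasDerivAt u u' x) (hv : HasDerivAt v v' x) (hu' : u' < 0) (hu0 : 0 ≤ u x)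
    (hv0 : 0 < v x) (hv' : 0 ≤ v') :
    deriv (fun s => u s / v s) x < 0 := by
  rw [(hu.fun_div hv hv0.ne').deriv]
  apply div_neg_of_neg_of_pos _ (by positivity)
  nlinarith [mul_nonneg hu0 hv']

namespace KerrNewman

noncomputable def P (M Q s : ℝ) : ℝ := 2 * M / s - Q ^ 2 / s ^ 2

noncomputable def rSq (M a Q s : ℝ) : ℝ := s ^ 2 + a ^ 2 + a ^ 2 * P M Q s

theorem rSq_eq (M a Q s : ℝ) :
    s ^ 2 + a ^ 2 + (2 * M * s - Q ^ 2) * a ^ 2 / s ^ 2 = rSq M a Q s := by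
  rcases eq_or_ne s 0 with rfl | hs
  · simp [rSq, P]
  · simp only [rSq, P]
    field_simp

theorem P_pos {M Q r : ℝ} (hr : 0 < r) (hQ : Q ^ 2 < 2 * M * r) : 0 < P M Q r := by
  have h : P M Q r = (2 * M * r - Q ^ 2) / r ^ 2 := by
    simp only [P]
    field_simp
  rw [h]
  exact div_pos (by linarith) (by positivity)

theorem hasDerivAt_P (M Q : ℝ) {s : ℝ} (hs : s ≠ 0) :
    HasDerivAt (P M Q) (2 * (Q ^ 2 - M * s) / s ^ 3) s := by
  have h : HasDerivAt (P M Q) _ s :=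
    ((hasDerivAt_const s (2 * M)).fun_div (hasDerivAt_id' s) hs).fun_sub
      ((hasDerivAt_const s (Q ^ 2)).fun_div (hasDerivAt_pow 2 s) (pow_ne_zero 2 hs))
  exact h.congr_deriv (by field_simp; ring)

theorem hasDerivAt_rSq (M a Q : ℝ) {s : ℝ} (hs : s ≠ 0) :
    HasDerivAt (rSq M a Q) (2 * s + a ^ 2 * (2 * (Q ^ 2 - M * s) / s ^ 3)) s := by
  have h : HasDerivAt (rSq M a Q) _ s :=
    ((hasDerivAt_pow 2 s).add_const (a ^ 2)).fun_add ((hasDerivAt_P M Q hs).const_mul (a ^ 2))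
  exact h.congr_deriv (by norm_num)

theorem rSq_deriv_pos {M a Q r : ℝ} (hM : 0 ≤ M) (hMr : M < r) (ha : a ^ 2 < r ^ 2) :
    0 < 2 * r + a ^ 2 * (2 * (Q ^ 2 - M * r) / r ^ 3) := by
  have hr : 0 < r := hM.trans_lt hMr
  have key : a ^ 2 * (M * r) < r ^ 2 * r ^ 2 :=
    mul_lt_mul'' ha (by nlinarith) (sq_nonneg a) (by positivity)
  have h : 2 * r + a ^ 2 * (2 * (Q ^ 2 - M * r) / r ^ 3)
      = 2 * (r ^ 4 - a ^ 2 * (M * r) + (a * Q) ^ 2) / r ^ 3 := by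
    field_simp
    ring
  rw [h]
  exact div_pos (by nlinarith [sq_nonneg (a * Q)]) (by positivity)

end KerrNewman

open KerrNewman in
/-- The function ωR = aP/R of the Kerr–Newman metric has negative derivative
outside the horizon. -/
theorem KerrNewman_omegaR_deriv_neg
    (M a Q : ℝ) (hM : 0 < M) (ha : 0 < a) (h : a^2 + Q^2 ≤ M^2)
    (r : ℝ) (hr : M + Real.sqrt (M^2 - Q^2 - a^2) < r) :
    deriv (fun s => a * (2*M/s - Q^2/s^2) /
        Real.sqrt (s^2 + a^2 + (2*M*s - Q^2) * a^2 / s^2)) r < 0 := by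
  have hMr : M < r := (le_add_of_nonneg_right (Real.sqrt_nonneg _)).trans_lt hr
  have hr0 : 0 < r := hM.trans hMr
  have hP : 0 < P M Q r := P_pos hr0 (by nlinarith)
  have hP' : 2 * (Q ^ 2 - M * r) / r ^ 3 < 0 :=
    div_neg_of_neg_of_pos (by nlinarith) (by positivity)
  have hrSq : 0 < rSq M a Q r :=
    add_pos_of_pos_of_nonneg (by positivity) (mul_nonneg (sq_nonneg a) hP.le)
  have hrSq' : 0 < 2 * r + a ^ 2 * (2 * (Q ^ 2 - M * r) / r ^ 3) :=
    rSq_deriv_pos hM.le hMr (by nlinarith [sq_nonneg Q])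
  simp only [rSq_eq]
  exact deriv_div_neg_of_hasDerivAt (u := fun s => a * P M Q s)
    ((hasDerivAt_P M Q hr0.ne').const_mul a) ((hasDerivAt_rSq M a Q hr0.ne').sqrt hrSq.ne')
    (mul_neg_of_pos_of_neg ha hP') (mul_pos ha hP).le (Real.sqrt_pos.mpr hrSq) (by positivity)
end
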